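/- arXiv:2406.06917 — 2 statements merged into one kernel-verified Lean document; each statement's English description precedes it below -/
import Mathlib

section
/- Let X be a monadic orthospace with relation R, let g : X → F(C(X)) be given by g(x) = {U ∈ C(X) : x ∈ U}, and define the relation S on the proper filters of the ortholattice C(X) by F S G iff {R[U] : U ∈ F} ⊆ G. For U₀ ∈ C(X) let 𝒱 = {F ∈ F(C(X)) : U₀ ∈ F}. Then g⁻¹[𝒱] = U₀, R[g⁻¹[𝒱]] = R[U₀] = g⁻¹[S[𝒱]]; in particular R[g⁻¹[𝒱]] = g⁻¹[S[𝒱]]. -/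
open Set

/-- The orthogonal `S^⊥` of a set with respect to an orthogonality relation. -/
def oset {X : Type*} (perp : X → X → Prop) (S : Set X) : Set X := {y | ∀ x ∈ S, perp x y}

/-- The relational image `R[A]`. -/
def relImg {X : Type*} (R : X → X → Prop) (A : Set X) : Set X := {y | ∃ x ∈ A, R x y}

/-- `c` is an orthocomplementation on the bounded lattice `L`. -/
structure IsOrthocompl {L : Type*} [Lattice L] [BoundedOrder L] (c : L → L) : Prop where
  antitone : ∀ a b : L, a ≤ b → c b ≤ c a
  involutive : ∀ a : L, c (c a) = a
  inf_compl : ∀ a : L, a ⊓ c a = ⊥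
  sup_compl : ∀ a : L, a ⊔ c a = ⊤

/-- `E` is a quantifier on the ortholattice `(L, c)`, making it a monadic ortholattice. -/
structure IsQuantifier {L : Type*} [Lattice L] [BoundedOrder L] (c E : L → L) : Prop where
  le_exists : ∀ a : L, a ≤ E a
  mono : ∀ a b : L, a ≤ b → E a ≤ E b
  idem : ∀ a : L, E (E a) = E a
  compl_closed : ∀ a : L, c (E a) = E (c (E a))

/-- `C(X)`: the clopen bi-orthogonally closed subsets of `X`. -/
def COf {X : Type*} [TopologicalSpace X] (perp : X → X → Prop) : Set (Set X) :=
  {U | IsClopen U ∧ oset perp (oset perp U) = U}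

/-- A monadic orthospace: an orthospace together with a reflexive transitive
relation `R` such that `R[R[{x}]^⊥] ⊆ R[{x}]^⊥` and `R[U] ∈ C(X)` for `U ∈ C(X)`. -/
structure IsMonadicOrthospace (X : Type*) [TopologicalSpace X] [PartialOrder X]
    (perp : X → X → Prop) (R : X → X → Prop) : Prop where
  compact : CompactSpace X
  irrefl : ∀ x : X, ¬ perp x x
  symm : ∀ x y : X, perp x y → perp y x
  sep : ∀ x y : X, ¬ x ≤ y → ∃ U ∈ COf perp, x ∈ U ∧ y ∉ U
  up_perp : ∀ x y z : X, perp x z → x ≤ y → perp y z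
  perp_mem : ∀ U ∈ COf perp, oset perp U ∈ COf perp
  sep_perp : ∀ x y : X, perp x y → ∃ U ∈ COf perp, x ∈ U ∧ y ∈ oset perp U
  R_refl : Reflexive R
  R_trans : Transitive R
  R_frame : ∀ x : X, relImg R (oset perp (relImg R {x})) ⊆ oset perp (relImg R {x})
  R_mem : ∀ U ∈ COf perp, relImg R U ∈ COf perp

/-- A proper filter of the family `C` of subsets of `X`, ordered by inclusion with
meet `∩`: a nonempty subfamily of `C`, upward closed within `C`, closed under binary
intersections, and not containing `∅`. -/
def IsProperFilterOn {X : Type*} (C : Set (Set X)) (F : Set (Set X)) : Prop :=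
  F ⊆ C ∧ F.Nonempty ∧ (∀ U ∈ F, ∀ V ∈ C, U ⊆ V → V ∈ F) ∧
    (∀ U ∈ F, ∀ V ∈ F, U ∩ V ∈ F) ∧ (∅ : Set X) ∉ F

/-- `g(x) = {U ∈ C(X) : x ∈ U}`. -/
def gC {X : Type*} [TopologicalSpace X] (perp : X → X → Prop) (x : X) : Set (Set X) :=
  {U | U ∈ COf perp ∧ x ∈ U}

lemma oset_antitone {X : Type*} (perp : X → X → Prop) {S T : Set X} (h : S ⊆ T) :
    oset perp T ⊆ oset perp S := fun y hy x hx => hy x (h hx)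

lemma subset_oset_oset {X : Type*} (perp : X → X → Prop)
    (hsymm : ∀ x y : X, perp x y → perp y x) (S : Set X) :
    S ⊆ oset perp (oset perp S) := fun x hx z hz => hsymm x z (hz x hx)

lemma univ_mem_COf {X : Type*} [TopologicalSpace X] (perp : X → X → Prop)
    (hirr : ∀ x : X, ¬ perp x x) : (univ : Set X) ∈ COf perp := by
  refine ⟨isClopen_univ, ?_⟩
  have h1 : oset perp (univ : Set X) = ∅ := by
    ext y; simp only [oset, mem_setOf_eq, mem_empty_iff_false, iff_false]
    intro h; exact hirr y (h y (mem_univ y))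
  rw [h1]; ext y; simp [oset]

lemma inter_mem_COf {X : Type*} [TopologicalSpace X] (perp : X → X → Prop)
    (hsymm : ∀ x y : X, perp x y → perp y x) {U V : Set X}
    (hU : U ∈ COf perp) (hV : V ∈ COf perp) : U ∩ V ∈ COf perp := by
  refine ⟨hU.1.inter hV.1, subset_antisymm ?_ (subset_oset_oset perp hsymm _)⟩
  intro y hy
  constructor
  · rw [← hU.2]
    exact oset_antitone perp (oset_antitone perp (inter_subset_left)) hy
  · rw [← hV.2]
    exact oset_antitone perp (oset_antitone perp (inter_subset_right)) hy

lemma gC_filter {X : Type*} [TopologicalSpace X] [PartialOrder X]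
    {perp R : X → X → Prop} (hX : IsMonadicOrthospace X perp R) (x : X) :
    IsProperFilterOn (COf perp) (gC perp x) := by
  refine ⟨fun U hU => hU.1, ⟨univ, univ_mem_COf perp hX.irrefl, mem_univ x⟩,
    fun U hU V hV hUV => ⟨hV, hUV hU.2⟩,
    fun U hU V hV => ⟨inter_mem_COf perp hX.symm hU.1 hV.1, hU.2, hV.2⟩,
    fun h => h.2⟩

/-- For a monadic orthospace `X` with `g(x) = {U ∈ C(X) : x ∈ U}`, the relation
`F S G` iff `{R[U] : U ∈ F} ⊆ G` on proper filters of `C(X)`, and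
`𝒱 = {F : U₀ ∈ F}` for `U₀ ∈ C(X)`: then `g⁻¹[𝒱] = U₀` and
`R[g⁻¹[𝒱]] = R[U₀] = g⁻¹[S[𝒱]]`. -/
theorem stmt15 {X : Type*} [TopologicalSpace X] [PartialOrder X]
    (perp R : X → X → Prop) (hX : IsMonadicOrthospace X perp R)
    (U₀ : Set X) (hU₀ : U₀ ∈ COf perp) :
    gC perp ⁻¹' {F | IsProperFilterOn (COf perp) F ∧ U₀ ∈ F} = U₀ ∧
    relImg R (gC perp ⁻¹' {F | IsProperFilterOn (COf perp) F ∧ U₀ ∈ F}) = relImg R U₀ ∧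
    relImg R U₀ = gC perp ⁻¹'
      {G | IsProperFilterOn (COf perp) G ∧
        ∃ F, (IsProperFilterOn (COf perp) F ∧ U₀ ∈ F) ∧
          {V | ∃ U ∈ F, V = relImg R U} ⊆ G} := by
  have h1 : gC perp ⁻¹' {F | IsProperFilterOn (COf perp) F ∧ U₀ ∈ F} = U₀ := by
    ext x
    simp only [mem_preimage, mem_setOf_eq]
    constructor
    · rintro ⟨-, -, hx⟩; exact hx
    · intro hx; exact ⟨gC_filter hX x, hU₀, hx⟩
  refine ⟨h1, by rw [h1], ?_⟩
  ext y
  simp only [mem_preimage, mem_setOf_eq]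
  constructor
  · rintro ⟨x, hx, hxy⟩
    refine ⟨gC_filter hX y, gC perp x, ⟨gC_filter hX x, hU₀, hx⟩, ?_⟩
    rintro V ⟨U, hU, rfl⟩
    exact ⟨hX.R_mem U hU.1, x, hU.2, hxy⟩
  · rintro ⟨-, F, ⟨hF, hU₀F⟩, hS⟩
    have : relImg R U₀ ∈ gC perp y := hS ⟨U₀, hU₀F, rfl⟩
    exact this.2
end

section
/- Let L be a monadic ortholattice, F(L) its set of proper filters with the Goldblatt orthogonality ⊥, relation x R y iff ∃[x] ⊆ y, and the topology generated by the sets h(a) = {x ∈ F(L) : a ∈ x} and their set-theoretic complements. Then for every subset U of F(L) that is clopen and bi-orthogonally closed, R[U] is again clopen and bi-orthogonally closed; that is, the Goldblatt orthospace of a monadic ortholattice is a monadic orthospace. -/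
open Set

/-- A proper filter of a bounded lattice: nonempty, upward closed, closed under
binary meets, and not containing `⊥`. -/
def IsProperFilter {L : Type*} [Lattice L] [BoundedOrder L] (x : Set L) : Prop :=
  x.Nonempty ∧ (∀ a ∈ x, ∀ b : L, a ≤ b → b ∈ x) ∧
    (∀ a ∈ x, ∀ b ∈ x, a ⊓ b ∈ x) ∧ (⊥ : L) ∉ x

/-- The set of proper filters of `L` (the underlying set of the Goldblatt orthoframe). -/
abbrev FL (L : Type*) [Lattice L] [BoundedOrder L] := {x : Set L // IsProperFilter x}

/-- Goldblatt orthogonality: `x ⊥ y` iff some `a` has `a ∈ x` and `a′ ∈ y`. -/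
def gperp {L : Type*} [Lattice L] [BoundedOrder L] (c : L → L) (x y : FL L) : Prop :=
  ∃ a : L, a ∈ x.1 ∧ c a ∈ y.1

/-- The relation `x R y` iff `∃[x] ⊆ y`, where `∃[x] = {∃a : a ∈ x}`. -/
def gR {L : Type*} [Lattice L] [BoundedOrder L] (E : L → L) (x y : FL L) : Prop :=
  E '' x.1 ⊆ y.1

/-- `h(a) = {x ∈ F(L) : a ∈ x}`. -/
def hset {L : Type*} [Lattice L] [BoundedOrder L] (a : L) : Set (FL L) := {x | a ∈ x.1}

/-- The Goldblatt topology on `F(L)`, generated by the sets `h(a)` and their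
set-theoretic complements. -/
instance goldTop (L : Type*) [Lattice L] [BoundedOrder L] : TopologicalSpace (FL L) :=
  TopologicalSpace.generateFrom ({S | ∃ a : L, S = hset a} ∪ {S | ∃ a : L, S = (hset a)ᶜ})

section Aux

variable {L : Type*} [Lattice L] [BoundedOrder L]

lemma top_mem (x : FL L) : (⊤ : L) ∈ x.1 := by
  obtain ⟨⟨a, ha⟩, hup, -, -⟩ := x.2
  exact hup a ha ⊤ le_top

lemma bot_not_mem (x : FL L) : (⊥ : L) ∉ x.1 := x.2.2.2.2

lemma up_mem (x : FL L) {a b : L} (ha : a ∈ x.1) (hab : a ≤ b) : b ∈ x.1 :=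
  x.2.2.1 a ha b hab

lemma isOpen_hset (a : L) : IsOpen (hset a : Set (FL L)) :=
  TopologicalSpace.GenerateOpen.basic _ (Or.inl ⟨a, rfl⟩)

lemma isOpen_hset_compl (a : L) : IsOpen ((hset a : Set (FL L))ᶜ) :=
  TopologicalSpace.GenerateOpen.basic _ (Or.inr ⟨a, rfl⟩)

lemma isClopen_hset (a : L) : IsClopen (hset a : Set (FL L)) :=
  ⟨isOpen_compl_iff.mp (isOpen_hset_compl a), isOpen_hset a⟩

lemma genOpen_mem {X : Type*} {g : Set (Set X)} {f : Filter X} {x : X}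
    (hg : ∀ s ∈ g, x ∈ s → s ∈ f) :
    ∀ s, TopologicalSpace.GenerateOpen g s → x ∈ s → s ∈ f := by
  intro s hs
  induction hs with
  | basic s hs => exact hg s hs
  | univ => exact fun _ => Filter.univ_mem
  | inter s t _ _ ihs iht => exact fun hx => Filter.inter_mem (ihs hx.1) (iht hx.2)
  | sUnion S _ ih =>
      rintro ⟨t, htS, hxt⟩
      exact Filter.mem_of_superset (ih t htS hxt) (subset_sUnion_of_mem htS)

instance fl_compact : CompactSpace (FL L) := by
  rw [← isCompact_univ_iff, isCompact_iff_ultrafilter_le_nhds]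
  intro f _
  have hx : IsProperFilter {a : L | hset a ∈ f} := by
    refine ⟨⟨⊤, ?_⟩, ?_, ?_, ?_⟩
    · have : (hset ⊤ : Set (FL L)) = univ := by
        ext z; simpa [hset] using top_mem z
      simp only [mem_setOf_eq, this]
      exact Filter.univ_mem
    · intro a ha b hab
      exact Filter.mem_of_superset ha (fun z hz => up_mem z hz hab)
    · intro a ha b hb
      refine Filter.mem_of_superset (Filter.inter_mem ha hb) ?_
      rintro z ⟨hza, hzb⟩
      exact z.2.2.2.1 a hza b hzb
    · have : (hset ⊥ : Set (FL L)) = ∅ := by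
        ext z; simpa [hset] using bot_not_mem z
      simp only [mem_setOf_eq, this]
      exact f.empty_notMem
  refine ⟨⟨_, hx⟩, mem_univ _, ?_⟩
  rw [le_nhds_iff]
  intro s hmem hs
  refine genOpen_mem ?_ s hs hmem
  rintro t (⟨a, rfl⟩ | ⟨a, rfl⟩) hxt
  · exact hxt
  · exact Ultrafilter.compl_mem_iff_notMem.mpr hxt

def pfil (a : L) (ha : a ≠ ⊥) : FL L :=
  ⟨{b | a ≤ b}, ⟨a, le_refl a⟩, fun p hp q hq => le_trans hp hq,
    fun p hp q hq => le_inf hp hq, fun h => ha (le_bot_iff.mp h)⟩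

variable {c E : L → L}

lemma c_bot (hc : IsOrthocompl c) : c (⊥ : L) = ⊤ := by
  have := hc.sup_compl (⊥ : L); rwa [bot_sup_eq] at this

lemma E_bot (hc : IsOrthocompl c) (hE : IsQuantifier c E) : E (⊥ : L) = ⊥ := by
  have h1 : E (⊥ : L) ≤ c (E ⊥) := by
    rw [hE.compl_closed]; exact hE.mono _ _ bot_le
  have h2 := hc.inf_compl (E (⊥ : L))
  rwa [inf_eq_left.mpr h1] at h2

lemma gperp_symm (hc : IsOrthocompl c) {x y : FL L} (h : gperp c x y) : gperp c y x := by
  obtain ⟨a, hax, hay⟩ := h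
  exact ⟨c a, hay, by rw [hc.involutive]; exact hax⟩

lemma hset_biortho (hc : IsOrthocompl c) (b : L) :
    oset (gperp c) (oset (gperp c) (hset b)) = (hset b : Set (FL L)) := by
  ext y
  constructor
  · intro hy
    by_cases hb : b = ⊤
    · subst hb; exact top_mem y
    · have hcb : c b ≠ ⊥ := by
        intro h
        have hinv := hc.involutive b
        rw [h, c_bot hc] at hinv
        exact hb hinv.symm
      have hx : pfil (c b) hcb ∈ oset (gperp c) (hset b) :=
        fun w hw => ⟨b, hw, le_refl (c b)⟩
      obtain ⟨d, hdx, hdy⟩ := hy _ hx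
      have hdb : c d ≤ b := by
        have := hc.antitone _ _ hdx; rwa [hc.involutive] at this
      exact up_mem y hdy hdb
  · intro hy x hx
    exact gperp_symm hc (hx y hy)

lemma relImg_hset (hc : IsOrthocompl c) (hE : IsQuantifier c E) (a : L) :
    relImg (gR E) (hset a) = (hset (E a) : Set (FL L)) := by
  ext y
  constructor
  · rintro ⟨x, hax, hxy⟩
    exact hxy ⟨a, hax, rfl⟩
  · intro hy
    by_cases ha : a = ⊥
    · exfalso; subst ha; rw [E_bot hc hE] at hy; exact bot_not_mem y hy
    · refine ⟨pfil a ha, le_refl a, ?_⟩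
      rintro _ ⟨b, hb, rfl⟩
      exact up_mem y hy (hE.mono a b hb)

lemma clopen_biortho_eq (hc : IsOrthocompl c) {U : Set (FL L)} (hU : IsClopen U)
    (hUc : oset (gperp c) (oset (gperp c) U) = U) : ∃ a : L, U = hset a := by
  have hcomp : IsCompact U := hU.isClosed.isCompact
  have hcompc : IsCompact Uᶜ := hU.compl.isClosed.isCompact
  have step1 : ∀ y : FL L, y ∉ U → ∃ a : L, U ⊆ hset a ∧ a ∉ y.1 := by
    intro y hy
    rw [← hUc] at hy
    obtain ⟨x, hx, hxy⟩ : ∃ x ∈ oset (gperp c) U, ¬ gperp c x y := by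
      by_contra h; push_neg at h; exact hy h
    have hcover : U ⊆ ⋃ b : x.1, hset (c b.1) := by
      intro z hz
      obtain ⟨a, haz, hax⟩ := hx z hz
      refine mem_iUnion.mpr ⟨⟨c a, hax⟩, ?_⟩
      show c (c a) ∈ z.1
      rwa [hc.involutive]
    obtain ⟨t, ht⟩ := hcomp.elim_finite_subcover (fun b : x.1 => hset (c b.1)) (fun b => isOpen_hset (c b.1)) hcover
    rcases t.eq_empty_or_nonempty with rfl | htne
    · refine ⟨⊥, ?_, bot_not_mem y⟩
      intro z hz
      simpa using ht hz
    · set m := t.inf' htne (fun b => (b : L)) with hm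
      have hmx : m ∈ x.1 := Finset.inf'_mem x.1 x.2.2.2.1 t htne _ (fun i _ => i.2)
      refine ⟨c m, ?_, fun hcm => hxy ⟨m, hmx, hcm⟩⟩
      intro z hz
      obtain ⟨b, hbt, hzb⟩ := mem_iUnion₂.mp (ht hz)
      exact up_mem z hzb (hc.antitone _ _ (Finset.inf'_le _ hbt))
  choose! A hA1 hA2 using step1
  have hcov2 : Uᶜ ⊆ ⋃ y : ↥Uᶜ, (hset (A y.1))ᶜ := by
    intro z hz
    exact mem_iUnion.mpr ⟨⟨z, hz⟩, hA2 z hz⟩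
  obtain ⟨s, hs⟩ := hcompc.elim_finite_subcover (fun y : ↥Uᶜ => (hset (A y.1))ᶜ) (fun y => isOpen_hset_compl (A y.1)) hcov2
  rcases s.eq_empty_or_nonempty with rfl | hsne
  · refine ⟨⊤, ?_⟩
    ext z
    simp only [hset, mem_setOf_eq]
    refine ⟨fun _ => top_mem z, fun _ => ?_⟩
    by_contra hzU
    simpa using hs hzU
  · set m := s.inf' hsne (fun y => A y.1) with hm
    refine ⟨m, subset_antisymm ?_ ?_⟩
    · intro z hz
      exact Finset.inf'_mem z.1 z.2.2.2.1 s hsne _ (fun y _ => hA1 y.1 y.2 hz)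
    · intro z hz
      by_contra hzU
      obtain ⟨y, hys, hzy⟩ := mem_iUnion₂.mp (hs hzU)
      exact hzy (up_mem z hz (Finset.inf'_le _ hys))

end Aux

/-- For a monadic ortholattice `L`, in the Goldblatt orthospace `F(L)` (with the
topology generated by the sets `h(a)` and their complements), the relational image
`R[U]` of any clopen bi-orthogonally closed `U` is again clopen and bi-orthogonally
closed: the Goldblatt orthospace of a monadic ortholattice is a monadic orthospace. -/
theorem stmt19 {L : Type*} [Lattice L] [BoundedOrder L] (c E : L → L)
    (hc : IsOrthocompl c) (hE : IsQuantifier c E)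
    (U : Set (FL L)) (hUclopen : IsClopen U)
    (hUclosed : oset (gperp c) (oset (gperp c) U) = U) :
    IsClopen (relImg (gR E) U) ∧
      oset (gperp c) (oset (gperp c) (relImg (gR E) U)) = relImg (gR E) U := by
  obtain ⟨a, rfl⟩ := clopen_biortho_eq hc hUclopen hUclosed
  rw [relImg_hset hc hE]
  exact ⟨isClopen_hset _, hset_biortho hc _⟩
end
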